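/- A 2-dimensional zonotope (zonogon) that is the Minkowski sum of n segments with pairwise non-collinear direction vectors has exactly 2n vertices. -/

import Mathlib

open Pointwise
open scoped Classical

noncomputable section

abbrev E3 := EuclideanSpace ℝ (Fin 3)

def IsPolytope {E : Type*} [NormedAddCommGroup E] [InnerProductSpace ℝ E] (P : Set E) : Prop :=
  ∃ S : Finset E, S.Nonempty ∧ P = convexHull ℝ (S : Set E)

def IsFace {E : Type*} [NormedAddCommGroup E] [InnerProductSpace ℝ E] (P F : Set E) : Prop :=
  F.Nonempty ∧ IsExposed ℝ P F

def faceDim {E : Type*} [NormedAddCommGroup E] [InnerProductSpace ℝ E] (F : Set E) : ℕ :=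
  Module.finrank ℝ (vectorSpan ℝ F)

def IsEdge (P e : Set E3) : Prop := IsFace P e ∧ faceDim e = 1

def IsFacet (P F : Set E3) : Prop := IsFace P F ∧ faceDim F = 2

def normalCone (P F : Set E3) : Set E3 :=
  {u | ∀ x ∈ P, ∀ y ∈ F, (inner ℝ u x : ℝ) ≤ (inner ℝ u y : ℝ)}

def aggCone (P : Set E3) (u : E3) : Set E3 :=
  ⋃ F ∈ {F : Set E3 | IsFace P F ∧
      Module.finrank ℝ (Submodule.span ℝ (normalCone P F)) = 2 ∧
      normalCone P F ⊆ ((ℝ ∙ u)ᗮ : Set E3)},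
    normalCone P F

def firstNonzeroPos (u : E3) : Prop := ∃ i : Fin 3, 0 < u i ∧ ∀ j < i, u j = 0

def IsEdgeDirection (P : Set E3) (u : E3) : Prop :=
  ‖u‖ = 1 ∧ firstNonzeroPos u ∧ ∃ e : Set E3, IsEdge P e ∧ vectorSpan ℝ e = ℝ ∙ u

def proj (H : Submodule ℝ E3) (x : E3) : E3 := (H.orthogonalProjection x : E3)

def IsPolygonWith (Q : Set E3) (k : ℕ) : Prop :=
  IsPolytope Q ∧ Module.finrank ℝ (vectorSpan ℝ Q) = 2 ∧ (Set.extremePoints ℝ Q).ncard = k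

def IsKEquiprojective (P : Set E3) (k : ℕ) : Prop :=
  ∀ H : Submodule ℝ E3, Module.finrank ℝ H = 2 →
    (∀ F : Set E3, IsFacet P F → ¬ (Hᗮ ≤ vectorSpan ℝ F)) →
    IsPolygonWith (proj H '' P) k

def IsEquiprojective (P : Set E3) : Prop := ∃ k, IsKEquiprojective P k

def mult (P : Set E3) (u : E3) : ℕ :=
  if aggCone P u = ((ℝ ∙ u)ᗮ : Set E3) then 2 else 1

def kappa (P : Set E3) : ℕ := ∑ᶠ u ∈ {u : E3 | IsEdgeDirection P u}, mult P u

def PairwiseNoncollinear {E : Type*} [AddCommGroup E] [Module ℝ E] (G : Finset E) : Prop :=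
  (∀ g ∈ G, g ≠ 0) ∧ ∀ g ∈ G, ∀ g' ∈ G, g ≠ g' → ∀ c : ℝ, g' ≠ c • g

def zonotope {E : Type*} [NormedAddCommGroup E] [InnerProductSpace ℝ E] (G : Finset E) : Set E :=
  ∑ g ∈ G, segment ℝ (0 : E) g

/-!
Each chamber of the arrangement of lines `g^⊥`, i.e. each sign pattern `S = {g | 0 < ⟪u, g⟫}` of a
direction `u` orthogonal to no generator, gives the vertex `∑ g ∈ S, g`, the unique maximiser of
`⟪u, ·⟫` on the zonotope. Conversely, at an extreme point `∑ t g • g` every coefficient is `0` or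
`1`, and a hyperplane separating it from the nearby points along the generators is such a `u`.
So vertices correspond to chambers. Adding a generator `a` adds one chamber for each chamber met
by `a^⊥` (deletion–restriction); in the plane `a^⊥` is a line meeting exactly two chambers, so
each generator adds two.
-/

open Finset Filter Topology
open scoped RealInnerProductSpace

section Chambers

variable {E : Type*} [NormedAddCommGroup E] [InnerProductSpace ℝ E] {G S T : Finset E} {a u w : E}

def Separates (u : E) (S G : Finset E) : Prop :=
  ∀ g ∈ G, (g ∈ S → 0 < ⟪u, g⟫) ∧ (g ∉ S → ⟪u, g⟫ < 0)

/-- The chambers of the central arrangement of the hyperplanes `g^⊥`, `g ∈ G`, each recorded by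
the set of generators that are positive on it. -/
def chambers (G : Finset E) : Finset (Finset E) :=
  G.powerset.filter fun S => ∃ u, Separates u S G

/-- The chambers of `G` that the hyperplane `a^⊥` cuts in two. -/
def chambersCutBy (G : Finset E) (a : E) : Finset (Finset E) :=
  (chambers G).filter fun T => ∃ w, Separates w T G ∧ ⟪w, a⟫ = 0

theorem mem_chambers : S ∈ chambers G ↔ S ⊆ G ∧ ∃ u, Separates u S G := by
  simp [chambers]

theorem chambers_empty : chambers (∅ : Finset E) = {∅} := by
  ext S
  simp [chambers, Separates]

theorem chambersCutBy_empty : chambersCutBy (∅ : Finset E) a = {∅} := by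
  ext S
  simp only [chambersCutBy, chambers_empty, mem_filter, mem_singleton, and_iff_left_iff_imp]
  rintro rfl
  exact ⟨0, fun g hg => absurd hg (notMem_empty g), inner_zero_left a⟩

theorem separates_filter (hu : ∀ g ∈ G, ⟪u, g⟫ ≠ 0) :
    Separates u (G.filter fun g => 0 < ⟪u, g⟫) G := fun g hg =>
  ⟨fun h => (mem_filter.1 h).2,
   fun h => (hu g hg).lt_of_le (not_lt.1 fun h' => h (mem_filter.2 ⟨hg, h'⟩))⟩

namespace Separates

theorem add (hu : Separates u S G) (hw : Separates w S G) : Separates (u + w) S G :=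
  fun g hg => by
    simp only [inner_add_left]
    exact ⟨fun h => add_pos ((hu g hg).1 h) ((hw g hg).1 h),
      fun h => add_neg ((hu g hg).2 h) ((hw g hg).2 h)⟩

theorem smul {c : ℝ} (hc : 0 < c) (hu : Separates u S G) : Separates (c • u) S G :=
  fun g hg => by
    simp only [real_inner_smul_left]
    exact ⟨fun h => mul_pos hc ((hu g hg).1 h), fun h => mul_neg_of_pos_of_neg hc ((hu g hg).2 h)⟩

theorem neg (hu : Separates u S G) : Separates (-u) (G \ S) G := fun g hg => by
  rw [inner_neg_left, neg_pos, neg_lt_zero]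
  exact ⟨fun h => (hu g hg).2 (mem_sdiff.1 h).2,
    fun h => (hu g hg).1 (not_not.1 fun h' => h (mem_sdiff.2 ⟨hg, h'⟩))⟩

theorem eq (hS : Separates u S G) (hT : Separates u T G) (hSG : S ⊆ G) (hTG : T ⊆ G) :
    S = T := by
  ext g
  by_cases hg : g ∈ G
  · by_cases hgS : g ∈ S
    · exact iff_of_true hgS (not_not.1 fun h => ((hS g hg).1 hgS).not_gt ((hT g hg).2 h))
    · exact iff_of_false hgS fun h => ((hS g hg).2 hgS).not_gt ((hT g hg).1 h)
  · exact iff_of_false (fun h => hg (hSG h)) fun h => hg (hTG h)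

theorem ne_zero (hu : Separates u S G) (hG : G.Nonempty) : u ≠ 0 := by
  rintro rfl
  obtain ⟨g, hg⟩ := hG
  by_cases hgS : g ∈ S
  · simpa using (hu g hg).1 hgS
  · simpa using (hu g hg).2 hgS

theorem eventually_add_smul (hu : Separates u S G) (a : E) :
    ∀ᶠ s in 𝓝 (0 : ℝ), Separates (u + s • a) S G := by
  refine (eventually_all_finset G).2 fun g hg => ?_
  have hcont : Tendsto (fun s : ℝ => ⟪u + s • a, g⟫) (𝓝 0) (𝓝 ⟪u, g⟫) := by
    have : Continuous fun s : ℝ => ⟪u + s • a, g⟫ := by fun_prop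
    simpa using this.tendsto 0
  by_cases hgS : g ∈ S
  · filter_upwards [hcont.eventually (lt_mem_nhds ((hu g hg).1 hgS))] with s hs
    exact ⟨fun _ => hs, fun h => absurd hgS h⟩
  · filter_upwards [hcont.eventually (gt_mem_nhds ((hu g hg).2 hgS))] with s hs
    exact ⟨fun h => absurd h hgS, fun _ => hs⟩

theorem exists_inner_pos (hw : Separates w S G) (ha : a ≠ 0) (hwa : 0 ≤ ⟪w, a⟫) :
    ∃ u, Separates u S G ∧ 0 < ⟪u, a⟫ := by
  obtain ⟨s, hs, hs_pos⟩ :=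
    ((hw.eventually_add_smul a).filter_mono nhdsWithin_le_nhds).and self_mem_nhdsWithin
      |>.exists (f := 𝓝[>] (0 : ℝ))
  refine ⟨_, hs, ?_⟩
  rw [inner_add_left, real_inner_smul_left, real_inner_self_eq_norm_sq]
  have : 0 < ‖a‖ := norm_pos_iff.2 ha
  have : (0 : ℝ) < s := hs_pos
  positivity

end Separates

end Chambers

section DeletionRestriction

variable {E : Type*} [NormedAddCommGroup E] [InnerProductSpace ℝ E] {G S T : Finset E} {a u : E}

theorem separates_insert_iff (haT : a ∉ T) :
    Separates u T (insert a G) ↔ Separates u T G ∧ ⟪u, a⟫ < 0 := by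
  simp only [Separates, forall_mem_insert, haT, false_imp_iff, not_false_eq_true, true_imp_iff,
    true_and]
  exact and_comm

theorem separates_insert_insert_iff (haG : a ∉ G) :
    Separates u (insert a T) (insert a G) ↔ Separates u T G ∧ 0 < ⟪u, a⟫ := by
  have hmem : ∀ g ∈ G, (g ∈ insert a T ↔ g ∈ T) := fun g hg =>
    ⟨fun h => (mem_insert.1 h).resolve_left (ne_of_mem_of_not_mem hg haG), mem_insert_of_mem⟩
  simp only [Separates, forall_mem_insert, mem_insert_self, not_true_eq_false, false_imp_iff,
    true_imp_iff, and_true]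
  rw [and_comm]
  refine and_congr_left' (forall₂_congr fun g hg => ?_)
  rw [hmem g hg]

theorem exists_separates_inner_neg_or_pos (hT : Separates u T G) (ha : a ≠ 0) :
    (∃ u, Separates u T G ∧ ⟪u, a⟫ < 0) ∨ ∃ u, Separates u T G ∧ 0 < ⟪u, a⟫ := by
  rcases le_total ⟪u, a⟫ 0 with h | h
  · left
    obtain ⟨v, hv, hva⟩ :=
      hT.exists_inner_pos (neg_ne_zero.2 ha) (by rwa [inner_neg_right, neg_nonneg])
    exact ⟨v, hv, by rwa [inner_neg_right, neg_pos] at hva⟩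
  · exact Or.inr (hT.exists_inner_pos ha h)

theorem exists_separates_inner_eq_zero_iff (ha : a ≠ 0) :
    ((∃ u, Separates u T G ∧ ⟪u, a⟫ < 0) ∧ ∃ u, Separates u T G ∧ 0 < ⟪u, a⟫) ↔
      ∃ w, Separates w T G ∧ ⟪w, a⟫ = 0 := by
  constructor
  · rintro ⟨⟨u, hu, hua⟩, v, hv, hva⟩
    refine ⟨⟪v, a⟫ • u + (-⟪u, a⟫) • v, (hu.smul hva).add (hv.smul (neg_pos.2 hua)), ?_⟩
    rw [inner_add_left, real_inner_smul_left, real_inner_smul_left]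
    ring
  · rintro ⟨w, hw, hwa⟩
    obtain ⟨u, hu, hua⟩ := hw.exists_inner_pos (neg_ne_zero.2 ha) (by simp [inner_neg_right, hwa])
    exact ⟨⟨u, hu, by rwa [inner_neg_right, neg_pos] at hua⟩, hw.exists_inner_pos ha hwa.ge⟩

theorem filter_notMem_chambers_insert (haG : a ∉ G) :
    (chambers (insert a G)).filter (a ∉ ·) =
      (chambers G).filter fun T => ∃ u, Separates u T G ∧ ⟪u, a⟫ < 0 := by
  ext S
  simp only [mem_filter, mem_chambers]
  constructor
  · rintro ⟨⟨hSG, u, hu⟩, haS⟩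
    rw [separates_insert_iff haS] at hu
    exact ⟨⟨(subset_insert_iff_of_notMem haS).1 hSG, u, hu.1⟩, u, hu⟩
  · rintro ⟨⟨hSG, -⟩, u, hu⟩
    have haS : a ∉ S := fun h => haG (hSG h)
    exact ⟨⟨hSG.trans (subset_insert a G), u, (separates_insert_iff haS).2 hu⟩, haS⟩

theorem card_filter_mem_chambers_insert (haG : a ∉ G) :
    #((chambers (insert a G)).filter (a ∈ ·)) =
      #((chambers G).filter fun T => ∃ u, Separates u T G ∧ 0 < ⟪u, a⟫) := by
  refine card_bij' (fun S _ => S.erase a) (fun T _ => insert a T) ?_ ?_ ?_ ?_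
  · intro S hS
    obtain ⟨hSc, haS⟩ := mem_filter.1 hS
    obtain ⟨hSG, u, hu⟩ := mem_chambers.1 hSc
    rw [← insert_erase haS, separates_insert_insert_iff haG] at hu
    refine mem_filter.2 ⟨mem_chambers.2 ⟨?_, u, hu.1⟩, u, hu⟩
    rw [← erase_insert haG]
    exact erase_subset_erase a hSG
  · intro T hT
    obtain ⟨hTc, u, hu⟩ := mem_filter.1 hT
    refine mem_filter.2 ⟨mem_chambers.2 ⟨insert_subset_insert a (mem_chambers.1 hTc).1, u, ?_⟩,
      mem_insert_self a T⟩
    exact (separates_insert_insert_iff haG).2 hu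
  · intro S hS
    exact insert_erase (mem_filter.1 hS).2
  · intro T hT
    exact erase_insert fun h => haG ((mem_chambers.1 (mem_filter.1 hT).1).1 h)

/-- Deletion–restriction: adding the generator `a` splits exactly the chambers cut by `a^⊥`. -/
theorem card_chambers_insert (ha : a ≠ 0) (haG : a ∉ G) :
    #(chambers (insert a G)) = #(chambers G) + #(chambersCutBy G a) := by
  set N := (chambers G).filter fun T => ∃ u, Separates u T G ∧ ⟪u, a⟫ < 0
  set P := (chambers G).filter fun T => ∃ u, Separates u T G ∧ 0 < ⟪u, a⟫
  have hunion : N ∪ P = chambers G := by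
    rw [← filter_or]
    refine filter_true_of_mem fun T hT => ?_
    obtain ⟨-, u, hu⟩ := mem_chambers.1 hT
    exact exists_separates_inner_neg_or_pos hu ha
  have hinter : N ∩ P = chambersCutBy G a := by
    rw [← filter_and]
    exact filter_congr fun T _ => exists_separates_inner_eq_zero_iff ha
  rw [← card_filter_add_card_filter_not (a ∈ ·), card_filter_mem_chambers_insert haG,
    filter_notMem_chambers_insert haG, add_comm, ← card_union_add_card_inter, hunion, hinter]

end DeletionRestriction

section Planar

variable {E : Type*} [NormedAddCommGroup E] [InnerProductSpace ℝ E] {G : Finset E} {a : E}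

theorem PairwiseNoncollinear.mono {G' : Finset E} (h : PairwiseNoncollinear G') (hG : G ⊆ G') :
    PairwiseNoncollinear G :=
  ⟨fun g hg => h.1 g (hG hg), fun g hg g' hg' => h.2 g (hG hg) g' (hG hg')⟩

variable [Fact (Module.finrank ℝ E = 2)]

theorem exists_ne_zero_inner_eq_zero (ha : a ≠ 0) : ∃ b ≠ 0, ⟪a, b⟫ = 0 := by
  have hrank : Module.finrank ℝ (ℝ ∙ a)ᗮ = 1 := Submodule.finrank_orthogonal_span_singleton ha
  obtain ⟨b, hb, hb0⟩ := Submodule.exists_mem_ne_zero_of_ne_bot (p := (ℝ ∙ a)ᗮ) fun h => by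
    rw [h, finrank_bot] at hrank
    exact zero_ne_one hrank
  exact ⟨b, hb0, Submodule.mem_orthogonal_singleton_iff_inner_right.1 hb⟩

/-- In the plane `a^⊥` is a line `ℝ b`; as `b` lies on no wall, it meets exactly the two chambers
containing `b` and `-b`. -/
theorem card_chambersCutBy (hG : G.Nonempty) (ha : a ≠ 0) (hGa : ∀ g ∈ G, ∀ c : ℝ, g ≠ c • a) :
    #(chambersCutBy G a) = 2 := by
  obtain ⟨b, hb, hab⟩ := exists_ne_zero_inner_eq_zero ha
  have hbG : ∀ g ∈ G, ⟪b, g⟫ ≠ 0 := fun g hg hbg => by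
    obtain ⟨c, hc⟩ := Submodule.mem_span_singleton.1
      (Submodule.mem_span_singleton_of_inner_eq_zero_of_inner_eq_zero hb ha hbg
        (by rwa [real_inner_comm]))
    exact hGa g hg c hc.symm
  set T := G.filter fun g => 0 < ⟪b, g⟫
  have hT : Separates b T G := separates_filter hbG
  have hTG : T ⊆ G := filter_subset _ _
  have hcut : chambersCutBy G a = {T, G \ T} := by
    ext S
    simp only [chambersCutBy, mem_filter, mem_chambers, mem_insert, mem_singleton]
    constructor
    · rintro ⟨⟨hSG, -⟩, w, hw, hwa⟩
      obtain ⟨c, rfl⟩ := Submodule.mem_span_singleton.1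
        (Submodule.mem_span_singleton_of_inner_eq_zero_of_inner_eq_zero ha hb
          (by rwa [real_inner_comm]) hab)
      rcases lt_trichotomy c 0 with hc | rfl | hc
      · refine Or.inr (hw.eq ?_ hSG sdiff_subset)
        rw [← neg_neg c, neg_smul, ← smul_neg]
        exact hT.neg.smul (neg_pos.2 hc)
      · exact absurd (zero_smul ℝ b) (hw.ne_zero hG)
      · exact Or.inl (hw.eq (hT.smul hc) hSG hTG)
    · rintro (rfl | rfl)
      · exact ⟨⟨hTG, b, hT⟩, b, hT, by rwa [real_inner_comm]⟩
      · refine ⟨⟨sdiff_subset, -b, hT.neg⟩, -b, hT.neg, ?_⟩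
        rw [inner_neg_left, real_inner_comm, hab, neg_zero]
  rw [hcut, card_pair]
  obtain ⟨g, hg⟩ := hG
  intro h
  by_cases hgT : g ∈ T
  · exact (mem_sdiff.1 (h ▸ hgT)).2 hgT
  · exact hgT (h ▸ mem_sdiff.2 ⟨hg, hgT⟩)

theorem card_chambers_of_finrank_eq_two (hG : G.Nonempty) (h : PairwiseNoncollinear G) :
    #(chambers G) = 2 * #G := by
  induction G using Finset.induction_on with
  | empty => exact absurd hG not_nonempty_empty
  | insert a G haG ih =>
    have ha : a ≠ 0 := h.1 a (mem_insert_self a G)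
    rw [card_chambers_insert ha haG, card_insert_of_notMem haG]
    rcases G.eq_empty_or_nonempty with rfl | hGne
    · simp [chambers_empty, chambersCutBy_empty]
    have hGa : ∀ g ∈ G, ∀ c : ℝ, g ≠ c • a := fun g hg =>
      h.2 a (mem_insert_self a G) g (mem_insert_of_mem hg) (ne_of_mem_of_not_mem hg haG).symm
    rw [ih hGne (h.mono (subset_insert a G)), card_chambersCutBy hGne ha hGa]
    ring

end Planar

section Vertices

variable {E : Type*} [NormedAddCommGroup E] [InnerProductSpace ℝ E] {G S T : Finset E}
  {t : E → ℝ} {u x : E}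

theorem convex_zonotope (G : Finset E) : Convex ℝ (zonotope G) :=
  convex_sum _ fun g _ => convex_segment 0 g

theorem mem_zonotope_iff :
    x ∈ zonotope G ↔ ∃ t : E → ℝ, (∀ g ∈ G, t g ∈ Set.Icc 0 1) ∧ ∑ g ∈ G, t g • g = x := by
  simp only [zonotope, Set.mem_finsetSum, segment_eq_image', sub_zero, zero_add, Set.mem_image]
  constructor
  · rintro ⟨f, hf, rfl⟩
    choose! t ht hft using fun g (hg : g ∈ G) => hf hg
    exact ⟨t, ht, sum_congr rfl hft⟩
  · rintro ⟨t, ht, rfl⟩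
    exact ⟨fun g => t g • g, fun hg => ⟨t _, ht _ hg, rfl⟩, rfl⟩

theorem sum_ite_mem_smul (hSG : S ⊆ G) :
    ∑ g ∈ G, (if g ∈ S then (1 : ℝ) else 0) • g = ∑ g ∈ S, g := by
  simp only [ite_smul, one_smul, zero_smul, sum_ite_mem, inter_eq_right.2 hSG]

theorem sum_update_smul {g : E} (hg : g ∈ G) (r : ℝ) :
    ∑ h ∈ G, Function.update t g r h • h = ∑ h ∈ G, t h • h + (r - t g) • g := by
  rw [← sum_erase_add G _ hg, ← sum_erase_add G (fun h => t h • h) hg, Function.update_self,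
    sum_congr rfl fun h hh => by rw [Function.update_of_ne (ne_of_mem_erase hh)], sub_smul]
  abel

/-- The linear form `⟪u, ·⟫` of a chamber is maximised on the zonotope exactly at `∑ g ∈ S, g`. -/
theorem Separates.inner_sum_smul_le (hu : Separates u S G) (hSG : S ⊆ G)
    (ht : ∀ g ∈ G, t g ∈ Set.Icc 0 1) :
    ⟪u, ∑ g ∈ G, t g • g⟫ ≤ ⟪u, ∑ g ∈ S, g⟫ ∧
      (⟪u, ∑ g ∈ S, g⟫ ≤ ⟪u, ∑ g ∈ G, t g • g⟫ → ∀ g ∈ G, t g = if g ∈ S then 1 else 0) := by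
  set c : E → ℝ := fun g => if g ∈ S then 1 else 0
  have hdiff : ⟪u, ∑ g ∈ S, g⟫ - ⟪u, ∑ g ∈ G, t g • g⟫ = ∑ g ∈ G, (c g - t g) * ⟪u, g⟫ := by
    rw [← sum_ite_mem_smul hSG, ← inner_sub_right, ← sum_sub_distrib, inner_sum]
    exact sum_congr rfl fun g _ => by rw [← sub_smul, real_inner_smul_right]
  have hterm : ∀ g ∈ G, 0 ≤ (c g - t g) * ⟪u, g⟫ ∧ ((c g - t g) * ⟪u, g⟫ = 0 → t g = c g) := by
    intro g hg
    obtain ⟨ht0, ht1⟩ := ht g hg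
    by_cases hgS : g ∈ S
    · have hpos := (hu g hg).1 hgS
      simp only [c, if_pos hgS, mul_eq_zero, hpos.ne', or_false]
      exact ⟨by nlinarith, fun h => by linarith⟩
    · have hneg := (hu g hg).2 hgS
      simp only [c, if_neg hgS, mul_eq_zero, hneg.ne, or_false]
      exact ⟨by nlinarith, fun h => by linarith⟩
  refine ⟨sub_nonneg.1 (hdiff ▸ sum_nonneg fun g hg => (hterm g hg).1), fun hle g hg => ?_⟩
  have hzero : ∑ g ∈ G, (c g - t g) * ⟪u, g⟫ = 0 := by
    rw [← hdiff]
    linarith [sum_nonneg fun g hg => (hterm g hg).1]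
  exact (hterm g hg).2 ((sum_eq_zero_iff_of_nonneg fun g hg => (hterm g hg).1).1 hzero g hg)

theorem sum_mem_exposedPoints_zonotope (hS : S ∈ chambers G) :
    ∑ g ∈ S, g ∈ (zonotope G).exposedPoints ℝ := by
  obtain ⟨hSG, u, hu⟩ := mem_chambers.1 hS
  refine ⟨mem_zonotope_iff.2 ⟨_, fun g _ => ?_, sum_ite_mem_smul hSG⟩, innerSL ℝ u, ?_⟩
  · split_ifs <;> simp
  rintro _ hy
  obtain ⟨t, ht, rfl⟩ := mem_zonotope_iff.1 hy
  obtain ⟨hle, heq⟩ := hu.inner_sum_smul_le hSG ht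
  refine ⟨hle, fun hge => ?_⟩
  rw [← sum_ite_mem_smul hSG]
  exact sum_congr rfl fun g hg => by rw [heq hge g hg]

theorem injOn_sum_chambers : Set.InjOn (fun S => ∑ g ∈ S, g) (chambers G : Set (Finset E)) := by
  intro S hS T hT hST
  obtain ⟨hSG, u, hu⟩ := mem_chambers.1 hS
  have hTG := (mem_chambers.1 hT).1
  have hind : ∀ g ∈ G, (if g ∈ T then (1 : ℝ) else 0) = if g ∈ S then 1 else 0 := by
    refine (hu.inner_sum_smul_le hSG fun g _ => ?_).2 ?_
    · split_ifs <;> simp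
    · rw [sum_ite_mem_smul hTG]
      exact (congrArg _ hST).le
  ext g
  by_cases hg : g ∈ G
  · have := hind g hg
    split_ifs at this <;> simp_all
  · exact iff_of_false (fun h => hg (hSG h)) fun h => hg (hTG h)

end Vertices

section Extreme

variable {E : Type*} [NormedAddCommGroup E] [InnerProductSpace ℝ E] [CompleteSpace E]
  {G : Finset E} {t : E → ℝ} {x : E}

theorem exists_inner_lt_of_notMem_convexHull {s : Set E} (hs : s.Finite)
    (hx : x ∉ convexHull ℝ s) : ∃ u : E, ∀ y ∈ s, ⟪u, y⟫ < ⟪u, x⟫ := by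
  obtain ⟨f, c, hf, hc⟩ :=
    geometric_hahn_banach_closed_point (convex_convexHull ℝ s) (hs.isClosed_convexHull ℝ) hx
  refine ⟨(InnerProductSpace.toDual ℝ E).symm f, fun y hy => ?_⟩
  simp only [InnerProductSpace.toDual_symm_apply]
  exact (hf y (subset_convexHull ℝ s hy)).trans hc

/-- Separate `x` from the points obtained by moving one coefficient to `0` or `1`: they lie in the
zonotope, so the extreme point `x` is not in their convex hull. -/
theorem exists_inner_of_sum_smul_mem_extremePoints (hG : ∀ g ∈ G, g ≠ 0)
    (ht : ∀ g ∈ G, t g ∈ Set.Icc 0 1)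
    (hx : ∑ g ∈ G, t g • g ∈ (zonotope G).extremePoints ℝ) :
    ∃ u : E, ∀ g ∈ G, (t g ≠ 0 → 0 < ⟪u, g⟫) ∧ (t g ≠ 1 → ⟪u, g⟫ < 0) := by
  set x := ∑ g ∈ G, t g • g
  set P := Set.image2 (fun g (r : ℝ) => x + (r - t g) • g) G {0, 1} \ {x}
  have hPZ : P ⊆ zonotope G \ {x} := by
    rintro _ ⟨⟨g, hg, r, hr, rfl⟩, hne⟩
    refine ⟨mem_zonotope_iff.2 ⟨Function.update t g r, fun h hh => ?_, sum_update_smul hg r⟩, hne⟩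
    rcases eq_or_ne h g with rfl | hhg
    · rcases hr with rfl | rfl <;> simp
    · rw [Function.update_of_ne hhg]
      exact ht h hh
  have hxP : x ∉ convexHull ℝ P := fun h =>
    (((convex_zonotope G).mem_extremePoints_iff_mem_sdiff_convexHull_sdiff).1 hx).2
      (convexHull_mono hPZ h)
  obtain ⟨u, hu⟩ := exists_inner_lt_of_notMem_convexHull
    (((G.finite_toSet.image2 _ (Set.toFinite {0, 1}))).sdiff) hxP
  have hmove : ∀ g ∈ G, ∀ r ∈ ({0, 1} : Set ℝ), r ≠ t g → (r - t g) * ⟪u, g⟫ < 0 := by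
    intro g hg r hr hrt
    have hne : x + (r - t g) • g ≠ x := by
      simpa [sub_eq_zero, hrt] using hG g hg
    have := hu _ ⟨Set.mem_image2_of_mem hg hr, hne⟩
    rw [inner_add_right, real_inner_smul_right] at this
    linarith
  refine ⟨u, fun g hg => ⟨fun h0 => ?_, fun h1 => ?_⟩⟩
  · have := hmove g hg 0 (by simp) (Ne.symm h0)
    have : 0 < t g := lt_of_le_of_ne (ht g hg).1 (Ne.symm h0)
    nlinarith
  · have := hmove g hg 1 (by simp) (Ne.symm h1)
    have : t g < 1 := lt_of_le_of_ne (ht g hg).2 h1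
    nlinarith

theorem exists_mem_chambers_of_mem_extremePoints (hG : ∀ g ∈ G, g ≠ 0)
    (hx : x ∈ (zonotope G).extremePoints ℝ) : ∃ S ∈ chambers G, ∑ g ∈ S, g = x := by
  obtain ⟨t, ht, rfl⟩ := mem_zonotope_iff.1 hx.1
  obtain ⟨u, hu⟩ := exists_inner_of_sum_smul_mem_extremePoints hG ht hx
  have hpin : ∀ g ∈ G, t g = 0 ∨ t g = 1 := fun g hg => by
    by_contra! h
    exact ((hu g hg).1 h.1).not_gt ((hu g hg).2 h.2)
  set S := G.filter fun g => t g = 1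
  have hSG : S ⊆ G := filter_subset _ _
  refine ⟨S, mem_chambers.2 ⟨hSG, u, fun g hg => ⟨fun hgS => ?_, fun hgS => ?_⟩⟩, ?_⟩
  · exact (hu g hg).1 (by simp [(mem_filter.1 hgS).2])
  · exact (hu g hg).2 fun h => hgS (mem_filter.2 ⟨hg, h⟩)
  · rw [← sum_ite_mem_smul hSG]
    refine sum_congr rfl fun g hg => ?_
    rcases hpin g hg with h | h <;> simp [S, hg, h]

theorem extremePoints_zonotope (hG : ∀ g ∈ G, g ≠ 0) :
    (zonotope G).extremePoints ℝ = (fun S => ∑ g ∈ S, g) '' (chambers G : Set (Finset E)) := by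
  refine Set.Subset.antisymm (fun x hx => ?_) ?_
  · obtain ⟨S, hS, rfl⟩ := exists_mem_chambers_of_mem_extremePoints hG hx
    exact ⟨S, hS, rfl⟩
  · rintro _ ⟨S, hS, rfl⟩
    exact exposedPoints_subset_extremePoints (sum_mem_exposedPoints_zonotope hS)

theorem ncard_extremePoints_zonotope (hG : ∀ g ∈ G, g ≠ 0) :
    ((zonotope G).extremePoints ℝ).ncard = #(chambers G) := by
  rw [extremePoints_zonotope hG, injOn_sum_chambers.ncard_image, Set.ncard_coe_finset]

end Extreme

theorem zonogon_vertex_count (G : Finset (EuclideanSpace ℝ (Fin 2))) (hG : G.Nonempty)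
    (h : PairwiseNoncollinear G) :
    (Set.extremePoints ℝ (zonotope G)).ncard = 2 * G.card := by
  have : Fact (Module.finrank ℝ (EuclideanSpace ℝ (Fin 2)) = 2) := ⟨finrank_euclideanSpace_fin⟩
  rw [ncard_extremePoints_zonotope h.1, card_chambers_of_finrank_eq_two hG h]
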